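/- If w, x, y, z are 2-adic numbers (elements of ℚ₂) satisfying w² + (x⁴ + y⁴ + z⁴) + 14·(x²y² + x²z² + y²z²) = 0, then w = x = y = z = 0. -/
import Mathlib

set_option maxRecDepth 100000
set_option synthInstance.maxSize 2000
set_option synthInstance.maxHeartbeats 1000000
set_option maxHeartbeats 1000000

namespace Stmt7Aux

open PadicInt

/-- Evenness predicate on `ZMod n`, decidable by search. -/
def Ev {n : ℕ} (b : ZMod n) : Prop := ∃ k, b = 2 * k

instance {n : ℕ} [NeZero n] (b : ZMod n) : Decidable (Ev b) := by
  unfold Ev; infer_instance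

lemma dvd_iff_toZModPow (n : ℕ) (x : ℤ_[2]) :
    (2 : ℤ_[2]) ^ n ∣ x ↔ toZModPow n x = 0 := by
  rw [← RingHom.mem_ker, ker_toZModPow, Ideal.mem_span_singleton]
  norm_cast

lemma cast_toZModPow (m n : ℕ) (h : m ≤ n) (x : ℤ_[2]) :
    ZMod.castHom (pow_dvd_pow 2 h) (ZMod (2 ^ m)) (toZModPow n x) = toZModPow m x := by
  have := RingHom.congr_fun (zmod_cast_comp_toZModPow (p := 2) m n h) x
  simpa using this

lemma even_iff (x : ℤ_[2]) : (2 : ℤ_[2]) ∣ x ↔ Ev (toZModPow 3 x) := by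
  constructor
  · rintro ⟨y, rfl⟩
    exact ⟨toZModPow 3 y, by rw [map_mul, map_ofNat]⟩
  · rintro ⟨k, hk⟩
    have h1 : toZModPow 1 x = 0 := by
      rw [← cast_toZModPow 1 3 (by norm_num), hk, map_mul, map_ofNat]
      rw [show (2 : ZMod (2 ^ 1)) = 0 from by decide, zero_mul]
    have := (dvd_iff_toZModPow 1 x).mpr h1
    simpa using this

lemma four_dvd₃ (x : ℤ_[2]) (h : ∃ k, toZModPow 3 x = 4 * k) : (2 : ℤ_[2]) ^ 2 ∣ x := by
  obtain ⟨k, hk⟩ := h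
  rw [dvd_iff_toZModPow]
  rw [← cast_toZModPow 2 3 (by norm_num), hk, map_mul, map_ofNat]
  rw [show (4 : ZMod (2 ^ 2)) = 0 from by decide, zero_mul]

lemma four_dvd₄ (x : ℤ_[2]) (h : ∃ k, toZModPow 4 x = 4 * k) : (2 : ℤ_[2]) ^ 2 ∣ x := by
  obtain ⟨k, hk⟩ := h
  rw [dvd_iff_toZModPow]
  rw [← cast_toZModPow 2 4 (by norm_num), hk, map_mul, map_ofNat]
  rw [show (4 : ZMod (2 ^ 2)) = 0 from by decide, zero_mul]

lemma mapEq (n : ℕ) (W X Y Z : ℤ_[2])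
    (h : W ^ 2 + (X ^ 4 + Y ^ 4 + Z ^ 4)
      + 14 * (X ^ 2 * Y ^ 2 + X ^ 2 * Z ^ 2 + Y ^ 2 * Z ^ 2) = 0) :
    (toZModPow n W) ^ 2
      + ((toZModPow n X) ^ 4 + (toZModPow n Y) ^ 4 + (toZModPow n Z) ^ 4)
      + 14 * ((toZModPow n X) ^ 2 * (toZModPow n Y) ^ 2
        + (toZModPow n X) ^ 2 * (toZModPow n Z) ^ 2
        + (toZModPow n Y) ^ 2 * (toZModPow n Z) ^ 2) = 0 := by
  have := congrArg (toZModPow n) h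
  simpa only [map_add, map_mul, map_pow, map_ofNat, map_zero] using this

/-- decide: no solution mod 8 with exactly one of `b, c, d` odd. -/
lemma claim1 : ∀ a b c d : ZMod (2 ^ 3),
    a ^ 2 + (b ^ 4 + c ^ 4 + d ^ 4)
      + 14 * (b ^ 2 * c ^ 2 + b ^ 2 * d ^ 2 + c ^ 2 * d ^ 2) = 0 →
    ¬ Ev b → Ev c → Ev d → False := by decide

/-- decide: no solution mod 8 with all of `b, c, d` odd. -/
lemma claim3 : ∀ a b c d : ZMod (2 ^ 3),
    a ^ 2 + (b ^ 4 + c ^ 4 + d ^ 4)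
      + 14 * (b ^ 2 * c ^ 2 + b ^ 2 * d ^ 2 + c ^ 2 * d ^ 2) = 0 →
    ¬ Ev b → ¬ Ev c → ¬ Ev d → False := by decide

/-- decide: if `b, c` odd and `d` even then `4 ∣ a` mod 8. -/
lemma claimB : ∀ a b c d : ZMod (2 ^ 3),
    a ^ 2 + (b ^ 4 + c ^ 4 + d ^ 4)
      + 14 * (b ^ 2 * c ^ 2 + b ^ 2 * d ^ 2 + c ^ 2 * d ^ 2) = 0 →
    ¬ Ev b → ¬ Ev c → Ev d → ∃ k, a = 4 * k := by decide

/-- decide: odd squares are 1 mod 8. -/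
lemma claimC : ∀ b : ZMod (2 ^ 3), ¬ Ev b → b ^ 2 = 1 := by decide

/-- decide: `a² = 0` mod 16 forces `4 ∣ a`. -/
lemma claimD : ∀ a : ZMod (2 ^ 4), a ^ 2 = 0 → ∃ k, a = 4 * k := by decide

/-- decide: the reduced two-odd equation has no solution mod 8. -/
lemma claimE : ∀ a t t' c : ZMod (2 ^ 3),
    a ^ 2 + 1 + 8 * (t + t') + 4 * (t + t') ^ 2 + 48 * (t * t')
      + c ^ 4 + 7 * c ^ 2 + 28 * c ^ 2 * (t + t') ≠ 0 := by decide

lemma noTwoOdd (W X Y Z : ℤ_[2])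
    (h : W ^ 2 + (X ^ 4 + Y ^ 4 + Z ^ 4)
      + 14 * (X ^ 2 * Y ^ 2 + X ^ 2 * Z ^ 2 + Y ^ 2 * Z ^ 2) = 0)
    (hx : ¬ (2 : ℤ_[2]) ∣ X) (hy : ¬ (2 : ℤ_[2]) ∣ Y) (hz : (2 : ℤ_[2]) ∣ Z) :
    False := by
  have h8 := mapEq 3 W X Y Z h
  have hxe : ¬ Ev (toZModPow 3 X) := fun he => hx ((even_iff X).mpr he)
  have hye : ¬ Ev (toZModPow 3 Y) := fun he => hy ((even_iff Y).mpr he)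
  have hze : Ev (toZModPow 3 Z) := (even_iff Z).mp hz
  obtain ⟨a, hWa⟩ := four_dvd₃ W (claimB _ _ _ _ h8 hxe hye hze)
  obtain ⟨c, hZc⟩ := hz
  have hXt : (2 : ℤ_[2]) ^ 3 ∣ (X ^ 2 - 1) := by
    rw [dvd_iff_toZModPow, map_sub, map_pow, map_one, claimC _ hxe, sub_self]
  have hYt : (2 : ℤ_[2]) ^ 3 ∣ (Y ^ 2 - 1) := by
    rw [dvd_iff_toZModPow, map_sub, map_pow, map_one, claimC _ hye, sub_self]
  obtain ⟨t, ht⟩ := hXt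
  obtain ⟨t', ht'⟩ := hYt
  have hX2 : X ^ 2 = 1 + 8 * t := by linear_combination ht
  have hY2 : Y ^ 2 = 1 + 8 * t' := by linear_combination ht'
  rw [hWa, hZc] at h
  have h16 : (16 : ℤ_[2]) * (a ^ 2 + 1 + 8 * (t + t') + 4 * (t + t') ^ 2
      + 48 * (t * t') + c ^ 4 + 7 * c ^ 2 + 28 * c ^ 2 * (t + t')) = 0 := by
    linear_combination h - (X ^ 2 + (1 + 8 * t) + 14 * Y ^ 2 + 56 * c ^ 2) * hX2
      - (Y ^ 2 + (1 + 8 * t') + 14 * (1 + 8 * t) + 56 * c ^ 2) * hY2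
  have hin : a ^ 2 + 1 + 8 * (t + t') + 4 * (t + t') ^ 2 + 48 * (t * t')
      + c ^ 4 + 7 * c ^ 2 + 28 * c ^ 2 * (t + t') = 0 :=
    mul_left_cancel₀ (by norm_num) (h16.trans (mul_zero (16 : ℤ_[2])).symm)
  have hmap := congrArg (toZModPow 3) hin
  simp only [map_add, map_mul, map_pow, map_ofNat, map_one, map_zero] at hmap
  exact claimE _ _ _ _ hmap

lemma evenX (W X Y Z : ℤ_[2])
    (h : W ^ 2 + (X ^ 4 + Y ^ 4 + Z ^ 4)
      + 14 * (X ^ 2 * Y ^ 2 + X ^ 2 * Z ^ 2 + Y ^ 2 * Z ^ 2) = 0) :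
    (2 : ℤ_[2]) ∣ X := by
  by_contra hx
  by_cases hy : (2 : ℤ_[2]) ∣ Y
  · by_cases hz : (2 : ℤ_[2]) ∣ Z
    · have h8 := mapEq 3 W X Y Z h
      exact claim1 _ _ _ _ h8 (fun he => hx ((even_iff X).mpr he))
        ((even_iff Y).mp hy) ((even_iff Z).mp hz)
    · exact noTwoOdd W X Z Y (by linear_combination h) hx hz hy
  · by_cases hz : (2 : ℤ_[2]) ∣ Z
    · exact noTwoOdd W X Y Z h hx hy hz
    · have h8 := mapEq 3 W X Y Z h
      exact claim3 _ _ _ _ h8 (fun he => hx ((even_iff X).mpr he))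
        (fun he => hy ((even_iff Y).mpr he)) (fun he => hz ((even_iff Z).mpr he))

lemma key (W X Y Z : ℤ_[2])
    (h : W ^ 2 + (X ^ 4 + Y ^ 4 + Z ^ 4)
      + 14 * (X ^ 2 * Y ^ 2 + X ^ 2 * Z ^ 2 + Y ^ 2 * Z ^ 2) = 0) :
    (2 : ℤ_[2]) ∣ X ∧ (2 : ℤ_[2]) ∣ Y ∧ (2 : ℤ_[2]) ∣ Z ∧ (2 : ℤ_[2]) ^ 2 ∣ W := by
  have hX := evenX W X Y Z h
  have hY := evenX W Y X Z (by linear_combination h)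
  have hZ := evenX W Z X Y (by linear_combination h)
  refine ⟨hX, hY, hZ, ?_⟩
  obtain ⟨x₁, rfl⟩ := hX
  obtain ⟨y₁, rfl⟩ := hY
  obtain ⟨z₁, rfl⟩ := hZ
  have hws : W ^ 2 = 2 ^ 4 * (-(x₁ ^ 4 + y₁ ^ 4 + z₁ ^ 4)
      - 14 * (x₁ ^ 2 * y₁ ^ 2 + x₁ ^ 2 * z₁ ^ 2 + y₁ ^ 2 * z₁ ^ 2)) := by
    linear_combination h
  have hsq : (toZModPow 4 W) ^ 2 = 0 := by
    have := congrArg (toZModPow 4) hws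
    simp only [map_add, map_mul, map_pow, map_ofNat, map_neg, map_sub] at this
    rw [this, show ((2 : ZMod (2 ^ 4)) ^ 4) = 0 from by decide, zero_mul]
  exact four_dvd₄ W (claimD _ hsq)

lemma descent (n : ℕ) : ∀ W X Y Z : ℤ_[2],
    W ^ 2 + (X ^ 4 + Y ^ 4 + Z ^ 4)
      + 14 * (X ^ 2 * Y ^ 2 + X ^ 2 * Z ^ 2 + Y ^ 2 * Z ^ 2) = 0 →
    (2 : ℤ_[2]) ^ n ∣ X ∧ (2 : ℤ_[2]) ^ n ∣ Y ∧ (2 : ℤ_[2]) ^ n ∣ Z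
      ∧ (2 : ℤ_[2]) ^ n ∣ W := by
  induction n with
  | zero => intro W X Y Z _; simp
  | succ n ih =>
    intro W X Y Z h
    obtain ⟨hX, hY, hZ, hW⟩ := key W X Y Z h
    obtain ⟨x₁, rfl⟩ := hX
    obtain ⟨y₁, rfl⟩ := hY
    obtain ⟨z₁, rfl⟩ := hZ
    obtain ⟨a, rfl⟩ := hW
    have h16 : (16 : ℤ_[2]) * (a ^ 2 + (x₁ ^ 4 + y₁ ^ 4 + z₁ ^ 4)
        + 14 * (x₁ ^ 2 * y₁ ^ 2 + x₁ ^ 2 * z₁ ^ 2 + y₁ ^ 2 * z₁ ^ 2)) = 0 := by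
      linear_combination h
    have h' : a ^ 2 + (x₁ ^ 4 + y₁ ^ 4 + z₁ ^ 4)
        + 14 * (x₁ ^ 2 * y₁ ^ 2 + x₁ ^ 2 * z₁ ^ 2 + y₁ ^ 2 * z₁ ^ 2) = 0 :=
      mul_left_cancel₀ (by norm_num) (h16.trans (mul_zero (16 : ℤ_[2])).symm)
    obtain ⟨hx, hy, hz, ha⟩ := ih a x₁ y₁ z₁ h'
    refine ⟨?_, ?_, ?_, ?_⟩
    · rw [pow_succ']; exact mul_dvd_mul_left 2 hx
    · rw [pow_succ']; exact mul_dvd_mul_left 2 hy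
    · rw [pow_succ']; exact mul_dvd_mul_left 2 hz
    · have h2a : (2 : ℤ_[2]) ^ 2 * a = 2 * (2 * a) := by ring
      rw [pow_succ', h2a]
      exact mul_dvd_mul_left 2 (ha.mul_left 2)

lemma eq_zero_of_all_dvd (x : ℤ_[2]) (h : ∀ n : ℕ, (2 : ℤ_[2]) ^ n ∣ x) : x = 0 := by
  by_contra hx
  have hxp : (0 : ℝ) < ‖x‖ := norm_pos_iff.mpr hx
  obtain ⟨n, hn⟩ := exists_pow_lt_of_lt_one hxp (by norm_num : (2⁻¹ : ℝ) < 1)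
  obtain ⟨c, hc⟩ := h n
  have h2 : ‖(2 : ℤ_[2]) ^ n‖ = (2⁻¹ : ℝ) ^ n := by
    have := PadicInt.norm_p_pow (p := 2) n
    push_cast at this
    rw [this]
    rw [zpow_neg, zpow_natCast, inv_pow]
  have hnorm : ‖x‖ ≤ (2⁻¹ : ℝ) ^ n := by
    rw [hc, norm_mul, h2]
    have := PadicInt.norm_le_one c
    nlinarith [norm_nonneg ((2 : ℤ_[2]) ^ n), norm_nonneg c]
  exact absurd (lt_of_le_of_lt hnorm hn) (lt_irrefl _)

lemma exists_pow_norm_le (q : ℚ_[2]) : ∃ n : ℕ, ∀ m : ℕ, n ≤ m → ‖(2 : ℚ_[2]) ^ m * q‖ ≤ 1 := by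
  by_cases hq : q = 0
  · exact ⟨0, fun m _ => by simp [hq]⟩
  · have hqp : (0 : ℝ) < ‖q‖⁻¹ := by
      rw [inv_pos]; exact norm_pos_iff.mpr hq
    obtain ⟨n, hn⟩ := exists_pow_lt_of_lt_one hqp (by norm_num : (2⁻¹ : ℝ) < 1)
    refine ⟨n, fun m hm => ?_⟩
    have h2 : ‖(2 : ℚ_[2]) ^ m‖ = (2⁻¹ : ℝ) ^ m := by
      have hp : ‖(2 : ℚ_[2])‖ = (2 : ℝ)⁻¹ := by
        have := Padic.norm_p (p := 2)
        push_cast at this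
        exact_mod_cast this
      rw [_root_.norm_pow, hp]
    rw [_root_.norm_mul, h2]
    have hmn : ((2 : ℝ)⁻¹) ^ m ≤ (2⁻¹ : ℝ) ^ n :=
      pow_le_pow_of_le_one (by norm_num) (by norm_num) hm
    have : ((2 : ℝ)⁻¹) ^ m ≤ ‖q‖⁻¹ := le_of_lt (lt_of_le_of_lt hmn hn)
    calc (2⁻¹ : ℝ) ^ m * ‖q‖ ≤ ‖q‖⁻¹ * ‖q‖ := by
          have := norm_nonneg q
          nlinarith
      _ = 1 := inv_mul_cancel₀ (norm_ne_zero_iff.mpr hq)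

end Stmt7Aux

/-- The equation `w² + (x⁴+y⁴+z⁴) + 14(x²y²+x²z²+y²z²) = 0` has only the zero
solution in the 2-adic numbers `ℚ₂`. -/
theorem stmt_7 (w x y z : ℚ_[2])
    (h : w ^ 2 + (x ^ 4 + y ^ 4 + z ^ 4)
      + 14 * (x ^ 2 * y ^ 2 + x ^ 2 * z ^ 2 + y ^ 2 * z ^ 2) = 0) :
    w = 0 ∧ x = 0 ∧ y = 0 ∧ z = 0 := by
  obtain ⟨nw, hnw⟩ := Stmt7Aux.exists_pow_norm_le w
  obtain ⟨nx, hnx⟩ := Stmt7Aux.exists_pow_norm_le x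
  obtain ⟨ny, hny⟩ := Stmt7Aux.exists_pow_norm_le y
  obtain ⟨nz, hnz⟩ := Stmt7Aux.exists_pow_norm_le z
  set N : ℕ := max (max nw nx) (max ny nz) with hN
  have hwN : nw ≤ N := le_trans (le_max_left nw nx) (le_max_left _ _)
  have hW1 : ‖(2 : ℚ_[2]) ^ (2 * N) * w‖ ≤ 1 := hnw _ (by omega)
  have hX1 : ‖(2 : ℚ_[2]) ^ N * x‖ ≤ 1 := hnx _ (le_trans (le_max_right nw nx) (le_max_left _ _))
  have hY1 : ‖(2 : ℚ_[2]) ^ N * y‖ ≤ 1 := hny _ (le_trans (le_max_left ny nz) (le_max_right _ _))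
  have hZ1 : ‖(2 : ℚ_[2]) ^ N * z‖ ≤ 1 := hnz _ (le_trans (le_max_right ny nz) (le_max_right _ _))
  set W : ℤ_[2] := ⟨(2 : ℚ_[2]) ^ (2 * N) * w, hW1⟩ with hWdef
  set X : ℤ_[2] := ⟨(2 : ℚ_[2]) ^ N * x, hX1⟩ with hXdef
  set Y : ℤ_[2] := ⟨(2 : ℚ_[2]) ^ N * y, hY1⟩ with hYdef
  set Z : ℤ_[2] := ⟨(2 : ℚ_[2]) ^ N * z, hZ1⟩ with hZdef
  have hEqQ : (W : ℚ_[2]) ^ 2 + ((X : ℚ_[2]) ^ 4 + (Y : ℚ_[2]) ^ 4 + (Z : ℚ_[2]) ^ 4)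
      + 14 * ((X : ℚ_[2]) ^ 2 * (Y : ℚ_[2]) ^ 2 + (X : ℚ_[2]) ^ 2 * (Z : ℚ_[2]) ^ 2
        + (Y : ℚ_[2]) ^ 2 * (Z : ℚ_[2]) ^ 2) = 0 := by
    show ((2 : ℚ_[2]) ^ (2 * N) * w) ^ 2 + (((2 : ℚ_[2]) ^ N * x) ^ 4 + ((2 : ℚ_[2]) ^ N * y) ^ 4
      + ((2 : ℚ_[2]) ^ N * z) ^ 4) + 14 * (((2 : ℚ_[2]) ^ N * x) ^ 2 * ((2 : ℚ_[2]) ^ N * y) ^ 2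
      + ((2 : ℚ_[2]) ^ N * x) ^ 2 * ((2 : ℚ_[2]) ^ N * z) ^ 2
      + ((2 : ℚ_[2]) ^ N * y) ^ 2 * ((2 : ℚ_[2]) ^ N * z) ^ 2) = 0
    have hpow : ((2 : ℚ_[2]) ^ N) ^ 4 = (2 : ℚ_[2]) ^ (2 * N) * (2 : ℚ_[2]) ^ (2 * N) := by
      rw [← pow_mul, ← pow_add]
      ring_nf
    linear_combination ((2 : ℚ_[2]) ^ (2 * N) * (2 : ℚ_[2]) ^ (2 * N)) * h
      + (w ^ 2 + x ^ 4 + y ^ 4 + z ^ 4 + 14 * (x ^ 2 * y ^ 2 + x ^ 2 * z ^ 2 + y ^ 2 * z ^ 2)) * hpow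
  have hEqZ : W ^ 2 + (X ^ 4 + Y ^ 4 + Z ^ 4)
      + 14 * (X ^ 2 * Y ^ 2 + X ^ 2 * Z ^ 2 + Y ^ 2 * Z ^ 2) = 0 := by
    exact Subtype.ext hEqQ
  have hall : ∀ n : ℕ, (2 : ℤ_[2]) ^ n ∣ X ∧ (2 : ℤ_[2]) ^ n ∣ Y ∧ (2 : ℤ_[2]) ^ n ∣ Z
      ∧ (2 : ℤ_[2]) ^ n ∣ W := fun n => Stmt7Aux.descent n W X Y Z hEqZ
  have hX0 : X = 0 := Stmt7Aux.eq_zero_of_all_dvd X (fun n => (hall n).1)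
  have hY0 : Y = 0 := Stmt7Aux.eq_zero_of_all_dvd Y (fun n => (hall n).2.1)
  have hZ0 : Z = 0 := Stmt7Aux.eq_zero_of_all_dvd Z (fun n => (hall n).2.2.1)
  have hW0 : W = 0 := Stmt7Aux.eq_zero_of_all_dvd W (fun n => (hall n).2.2.2)
  have hpw : (2 : ℚ_[2]) ^ N ≠ 0 := pow_ne_zero _ (by norm_num)
  have hpw2 : (2 : ℚ_[2]) ^ (2 * N) ≠ 0 := pow_ne_zero _ (by norm_num)
  have hw0 : (2 : ℚ_[2]) ^ (2 * N) * w = 0 := congrArg Subtype.val hW0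
  have hx0 : (2 : ℚ_[2]) ^ N * x = 0 := congrArg Subtype.val hX0
  have hy0 : (2 : ℚ_[2]) ^ N * y = 0 := congrArg Subtype.val hY0
  have hz0 : (2 : ℚ_[2]) ^ N * z = 0 := congrArg Subtype.val hZ0
  exact ⟨by rcases mul_eq_zero.mp hw0 with h' | h'; exact absurd h' hpw2; exact h',
    by rcases mul_eq_zero.mp hx0 with h' | h'; exact absurd h' hpw; exact h',
    by rcases mul_eq_zero.mp hy0 with h' | h'; exact absurd h' hpw; exact h',
    by rcases mul_eq_zero.mp hz0 with h' | h'; exact absurd h' hpw; exact h'⟩
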